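/- Let (x*, λ*) satisfy the optimality conditions and let k satisfy 0 < k < 1/(α λ_max(L_n)), where λ_max(L_n) is the largest eigenvalue of L_n. Then the function V*(𝐱, λ) = V₁*(𝐱, λ) + k V₂*(𝐱, λ) is nonnegative for all 𝐱 ∈ Ω and all λ ∈ ℝ^{nq}. -/

import Mathlib

open Matrix MeasureTheory Filter

noncomputable section

variable {E : Type*} [NormedAddCommGroup E] [InnerProductSpace ℝ E]

/-- Subdifferential of a real-valued function. -/
def subdiff (h : E → ℝ) (x : E) : Set E :=
  {g | ∀ y, h x + (inner ℝ g (y - x) : ℝ) ≤ h y}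

/-- Normal cone of a set `K` at `x`. -/
def normalCone (K : Set E) (x : E) : Set E :=
  {d | ∀ y ∈ K, (inner ℝ d (y - x) : ℝ) ≤ 0}

/-- Tangent cone of a set `K` at `x`. -/
def tangentCone (K : Set E) (x : E) : Set E :=
  closure {d | ∃ t : ℝ, 0 < t ∧ x + t • d ∈ K}

/-- `p` is the metric projection of `u` onto `K`. -/
def IsProjOn (K : Set E) (u p : E) : Prop :=
  p ∈ K ∧ ∀ v ∈ K, ‖u - p‖ ≤ ‖u - v‖

/-- Local absolute continuity on `[0, ∞)`. -/
def LocAC {F : Type*} [NormedAddCommGroup F] [NormedSpace ℝ F] [CompleteSpace F]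
    (φ : ℝ → F) : Prop :=
  (∀ᵐ t ∂(volume.restrict (Set.Ici (0:ℝ))), DifferentiableAt ℝ φ t) ∧
  LocallyIntegrableOn (deriv φ) (Set.Ici 0) volume ∧
  ∀ s t : ℝ, 0 ≤ s → s ≤ t → φ t - φ s = ∫ τ in s..t, deriv φ τ

/-- Weighted Laplacian matrix. -/
def lap (n : ℕ) (a : Fin n → Fin n → ℝ) : Matrix (Fin n) (Fin n) ℝ :=
  Matrix.of fun i j => if i = j then ∑ k ∈ Finset.univ.erase i, a i k else - a i j

/-- `L = Lₙ ⊗ I_q`. -/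
def bigL (n q : ℕ) (a : Fin n → Fin n → ℝ) :
    Matrix (Fin n × Fin q) (Fin n × Fin q) ℝ :=
  Matrix.kroneckerMap (· * ·) (lap n a) (1 : Matrix (Fin q) (Fin q) ℝ)

/-- `L` as a linear map on Euclidean space. -/
def Lmap (n q : ℕ) (a : Fin n → Fin n → ℝ) :
    EuclideanSpace ℝ (Fin n × Fin q) →ₗ[ℝ] EuclideanSpace ℝ (Fin n × Fin q) :=
  Matrix.toEuclideanLin (bigL n q a)

/-- `i`-th block of a stacked vector. -/
def blk {n q : ℕ} (x : EuclideanSpace ℝ (Fin n × Fin q)) (i : Fin n) :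
    EuclideanSpace ℝ (Fin q) := WithLp.toLp 2 (fun j => x (i, j))

/-- The product constraint set `Ω = Ω₁ × ⋯ × Ωₙ`. -/
def prodSet (n q : ℕ) (Ω : Fin n → Set (EuclideanSpace ℝ (Fin q))) :
    Set (EuclideanSpace ℝ (Fin n × Fin q)) :=
  {x | ∀ i, blk x i ∈ Ω i}

/-- `𝐟(𝐱) = ∑ᵢ fⁱ(xᵢ)`. -/
def bigF (n q : ℕ) (f : Fin n → EuclideanSpace ℝ (Fin q) → ℝ)
    (x : EuclideanSpace ℝ (Fin n × Fin q)) : ℝ :=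
  ∑ i, f i (blk x i)

/-- `1ₙ ⊗ v`. -/
def oneTensor (n q : ℕ) (v : EuclideanSpace ℝ (Fin q)) :
    EuclideanSpace ℝ (Fin n × Fin q) := WithLp.toLp 2 (fun p : Fin n × Fin q => v p.2)


/-- `V₁*(𝐱, λ) = ½‖𝐱 − x*‖² + ½‖λ − λ*‖²`. -/
def V1aux (xs lams u v : E) : ℝ :=
  (1/2) * ‖u - xs‖^2 + (1/2) * ‖v - lams‖^2

/-- `V₂*(𝐱, λ) = 𝐟(𝐱) − 𝐟(x*) + (α/2)⟨𝐱, L𝐱⟩ + α⟨𝐱, Lλ⟩`. -/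
def V2aux (n q : ℕ) (α : ℝ) (a : Fin n → Fin n → ℝ)
    (f : Fin n → EuclideanSpace ℝ (Fin q) → ℝ)
    (xs u v : EuclideanSpace ℝ (Fin n × Fin q)) : ℝ :=
  bigF n q f u - bigF n q f xs + (α/2) * (inner ℝ u (Lmap n q a u) : ℝ) +
    α * (inner ℝ u (Lmap n q a v) : ℝ)


/-!
Write `u = 𝐱 - x*` and `w = λ - λ*`. Because `L x* = 0` and `L` is symmetric,
`V₂* = 𝐟(𝐱) - 𝐟(x*) + α⟨u, Lλ*⟩ + (α/2)⟨u, Lu⟩ + α⟨u, Lw⟩`, and the subgradient and normal-cone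
inequalities at `x*` make the first three terms nonnegative. Since `0 ≤ L ≤ μ I` in the Loewner
order (`L = Lₙ ⊗ I_q` and `Lₙ ≤ μ I` because `μ` dominates the eigenvalues of `Lₙ`), positivity of
`⟨u + w, L(u + w)⟩` gives `(α/2)⟨u, Lu⟩ + α⟨u, Lw⟩ ≥ -(α/2)⟨w, Lw⟩ ≥ -(αμ/2)‖w‖²`.
Hence `V* ≥ ½(1 - kαμ)‖w‖² ≥ 0`.
-/

open scoped Kronecker RealInnerProductSpace

namespace Matrix

variable {ι : Type*} [Fintype ι] [DecidableEq ι]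

theorem IsHermitian.posSemidef_smul_one_sub {A : Matrix ι ι ℝ} (hA : A.IsHermitian) {μ : ℝ}
    (hμ : ∀ μ' : ℝ, (∃ v : ι → ℝ, v ≠ 0 ∧ A *ᵥ v = μ' • v) → μ' ≤ μ) :
    (μ • (1 : Matrix ι ι ℝ) - A).PosSemidef := by
  have hB : (μ • (1 : Matrix ι ι ℝ) - A).IsHermitian :=
    (isHermitian_one.smul (IsSelfAdjoint.all μ)).sub hA
  refine hB.posSemidef_iff_eigenvalues_nonneg.mpr fun i => ?_
  set v := hB.eigenvectorBasis i
  have hv : (v : ι → ℝ) ≠ 0 := fun h =>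
    hB.eigenvectorBasis.orthonormal.ne_zero i (by ext j; exact congrFun h j)
  have hAv : A *ᵥ v = (μ - hB.eigenvalues i) • (v : ι → ℝ) := by
    have := hB.mulVec_eigenvectorBasis i
    rw [sub_mulVec, smul_mulVec, one_mulVec] at this
    rw [sub_smul, ← this, sub_sub_cancel]
  simpa using hμ _ ⟨v, hv, hAv⟩

end Matrix

section Laplacian

variable {n : ℕ} {a : Fin n → Fin n → ℝ}

theorem lap_isHermitian (hsymm : ∀ i j, a i j = a j i) : (lap n a).IsHermitian := by
  ext i j
  rcases eq_or_ne i j with rfl | h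
  · rfl
  · simp [lap, h, Ne.symm h, hsymm]

theorem lap_eq_diagonal_sub (hdiag : ∀ i, a i i = 0) :
    lap n a = Matrix.diagonal (fun i => ∑ j, a i j) - Matrix.of a := by
  ext i j
  rcases eq_or_ne i j with rfl | h
  · simp [lap, hdiag]
  · simp [lap, h]

theorem lap_mulVec_apply (hdiag : ∀ i, a i i = 0) (v : Fin n → ℝ) (i : Fin n) :
    (lap n a *ᵥ v) i = ∑ j, a i j * (v i - v j) := by
  rw [lap_eq_diagonal_sub hdiag, Matrix.sub_mulVec, Pi.sub_apply, Matrix.mulVec_diagonal]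
  simp only [Matrix.mulVec, dotProduct, Matrix.of_apply, mul_sub, Finset.sum_sub_distrib,
    Finset.sum_mul]

theorem two_mul_dotProduct_lap_mulVec (hsymm : ∀ i j, a i j = a j i) (hdiag : ∀ i, a i i = 0)
    (v : Fin n → ℝ) :
    2 * (v ⬝ᵥ lap n a *ᵥ v) = ∑ i, ∑ j, a i j * (v i - v j) ^ 2 := by
  have hform : v ⬝ᵥ lap n a *ᵥ v = ∑ i, ∑ j, a i j * (v i * (v i - v j)) := by
    simp only [dotProduct, lap_mulVec_apply hdiag, Finset.mul_sum]
    exact Finset.sum_congr rfl fun i _ => Finset.sum_congr rfl fun j _ => by ring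
  have hswap : ∑ i, ∑ j, a i j * (v i * (v i - v j)) = ∑ i, ∑ j, a i j * (v j * (v j - v i)) := by
    rw [Finset.sum_comm]
    simp only [hsymm]
  rw [two_mul, hform]
  nth_rewrite 2 [hswap]
  rw [← Finset.sum_add_distrib]
  exact Finset.sum_congr rfl fun i _ => by
    rw [← Finset.sum_add_distrib]
    exact Finset.sum_congr rfl fun j _ => by ring

theorem lap_posSemidef (hsymm : ∀ i j, a i j = a j i) (hnn : ∀ i j, 0 ≤ a i j)
    (hdiag : ∀ i, a i i = 0) : (lap n a).PosSemidef := by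
  refine .of_dotProduct_mulVec_nonneg (lap_isHermitian hsymm) fun v => ?_
  have h := two_mul_dotProduct_lap_mulVec hsymm hdiag v
  have : 0 ≤ ∑ i, ∑ j, a i j * (v i - v j) ^ 2 :=
    Finset.sum_nonneg fun i _ => Finset.sum_nonneg fun j _ => mul_nonneg (hnn i j) (sq_nonneg _)
  rw [star_trivial]
  linarith

end Laplacian

section Lmap

variable {n q : ℕ} {a : Fin n → Fin n → ℝ}

theorem Lmap_eq_toEuclideanLin_kronecker : Lmap n q a = (lap n a ⊗ₖ 1).toEuclideanLin := rfl

theorem Lmap_nonneg (hsymm : ∀ i j, a i j = a j i) (hnn : ∀ i j, 0 ≤ a i j)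
    (hdiag : ∀ i, a i i = 0) : 0 ≤ Lmap n q a := by
  rw [LinearMap.nonneg_iff_isPositive, Lmap_eq_toEuclideanLin_kronecker,
    Matrix.isPositive_toEuclideanLin_iff]
  exact (lap_posSemidef hsymm hnn hdiag).kronecker .one

theorem Lmap_le_smul_one (hsymm : ∀ i j, a i j = a j i) {μ : ℝ}
    (hμ : ∀ μ' : ℝ, (∃ v : Fin n → ℝ, v ≠ 0 ∧ lap n a *ᵥ v = μ' • v) → μ' ≤ μ) :
    Lmap n q a ≤ μ • 1 := by
  have hkron : μ • (1 : Matrix (Fin n × Fin q) (Fin n × Fin q) ℝ) - lap n a ⊗ₖ 1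
      = (μ • 1 - lap n a) ⊗ₖ 1 := by
    rw [sub_eq_iff_eq_add, ← Matrix.add_kronecker, sub_add_cancel, Matrix.smul_kronecker,
      Matrix.one_kronecker_one]
  have hmap : μ • (1 : Module.End ℝ _) - Lmap n q a
      = (μ • 1 - lap n a ⊗ₖ (1 : Matrix (Fin q) (Fin q) ℝ)).toEuclideanLin := by
    rw [map_sub, map_smul, Lmap_eq_toEuclideanLin_kronecker, Matrix.toLpLin_one,
      Module.End.one_eq_id]
  rw [LinearMap.le_def, hmap, hkron, Matrix.isPositive_toEuclideanLin_iff]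
  exact ((lap_isHermitian hsymm).posSemidef_smul_one_sub hμ).kronecker .one

end Lmap

section Lyapunov

variable {T : E →ₗ[ℝ] E}

theorem inner_map_self_le_of_le_smul_one {μ : ℝ} (h : T ≤ μ • 1) (x : E) :
    ⟪x, T x⟫ ≤ μ * ‖x‖ ^ 2 := by
  have := ((LinearMap.le_def _ _).mp h).inner_nonneg_left x
  rw [LinearMap.sub_apply, LinearMap.smul_apply, Module.End.one_apply, inner_sub_left,
    real_inner_smul_left, real_inner_self_eq_norm_sq, real_inner_comm] at this
  linarith

theorem neg_inner_map_self_le (hT : 0 ≤ T) (u w : E) :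
    -⟪w, T w⟫ ≤ ⟪u, T u⟫ + 2 * ⟪u, T w⟫ := by
  have hTpos := (LinearMap.nonneg_iff_isPositive T).mp hT
  have hpos := hTpos.inner_nonneg_left (u + w)
  rw [map_add, inner_add_left, inner_add_right, inner_add_right] at hpos
  linarith [hTpos.isSymmetric u w, real_inner_comm u (T u), real_inner_comm w (T w),
    real_inner_comm u (T w)]

variable {F : E → ℝ} {K : Set E} {xs lams g x : E} {α : ℝ}

theorem neg_mul_inner_le_sub_of_optimal (hg : g ∈ subdiff F xs)
    (hnc : -g - α • T lams ∈ normalCone K xs) (hx : x ∈ K) :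
    -(α * ⟪x - xs, T lams⟫) ≤ F x - F xs := by
  have hsub := hg x
  have hcone := hnc x hx
  rw [inner_sub_left, inner_neg_left, real_inner_smul_left,
    real_inner_comm (x - xs) (T lams)] at hcone
  linarith

theorem mul_inner_add_mul_inner_le_of_optimal (hT : T.IsSymmetric) (hTxs : T xs = 0)
    (hg : g ∈ subdiff F xs) (hnc : -g - α • T lams ∈ normalCone K xs) (hx : x ∈ K) (lam : E) :
    α / 2 * ⟪x - xs, T (x - xs)⟫ + α * ⟪x - xs, T (lam - lams)⟫
      ≤ F x - F xs + α / 2 * ⟪x, T x⟫ + α * ⟪x, T lam⟫ := by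
  have hshift : ∀ y, ⟪x - xs, T y⟫ = ⟪x, T y⟫ := fun y => by
    rw [inner_sub_left, ← hT xs y, hTxs, inner_zero_left, sub_zero]
  have hopt := neg_mul_inner_le_sub_of_optimal hg hnc hx
  rw [map_sub T x xs, hTxs, sub_zero, hshift, map_sub, inner_sub_right, hshift]
  linarith

theorem V1aux_add_mul_nonneg {μ k : ℝ} (hT0 : 0 ≤ T) (hTμ : T ≤ μ • 1) (hα : 0 ≤ α)
    (hk : 0 ≤ k) (hkαμ : k * (α * μ) ≤ 1) (hTxs : T xs = 0) (hg : g ∈ subdiff F xs)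
    (hnc : -g - α • T lams ∈ normalCone K xs) (hx : x ∈ K) (lam : E) :
    0 ≤ V1aux xs lams x lam + k * (F x - F xs + α / 2 * ⟪x, T x⟫ + α * ⟪x, T lam⟫) := by
  set u := x - xs
  set w := lam - lams
  have hV2 := mul_inner_add_mul_inner_le_of_optimal
    ((LinearMap.nonneg_iff_isPositive T).mp hT0).isSymmetric hTxs hg hnc hx lam
  have hcross := neg_inner_map_self_le hT0 u w
  have hw := inner_map_self_le_of_le_smul_one hTμ w
  have hkα : 0 ≤ k * α / 2 := by positivity
  calc 0 ≤ 1 / 2 * ‖u‖ ^ 2 + (1 - k * (α * μ)) / 2 * ‖w‖ ^ 2 := by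
        have : 0 ≤ 1 - k * (α * μ) := by linarith
        positivity
    _ ≤ 1 / 2 * ‖u‖ ^ 2 + 1 / 2 * ‖w‖ ^ 2 + k * α / 2 * -⟪w, T w⟫ := by
        linarith [mul_le_mul_of_nonneg_left hw hkα]
    _ ≤ 1 / 2 * ‖u‖ ^ 2 + 1 / 2 * ‖w‖ ^ 2 + k * (α / 2 * ⟪u, T u⟫ + α * ⟪u, T w⟫) := by
        linarith [mul_le_mul_of_nonneg_left hcross hkα]
    _ ≤ V1aux xs lams x lam + k * (F x - F xs + α / 2 * ⟪x, T x⟫ + α * ⟪x, T lam⟫) := by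
        rw [V1aux]
        gcongr

end Lyapunov

theorem stmt7_general
    (n q : ℕ) (α : ℝ) (hα : 0 < α)
    (a : Fin n → Fin n → ℝ)
    (hsymm : ∀ i j, a i j = a j i) (hnn : ∀ i j, 0 ≤ a i j) (hdiag : ∀ i, a i i = 0)
    (f : Fin n → EuclideanSpace ℝ (Fin q) → ℝ)
    (Ω : Fin n → Set (EuclideanSpace ℝ (Fin q)))
    (xs lams : EuclideanSpace ℝ (Fin n × Fin q))
    (hLxs : Lmap n q a xs = 0)
    (hopt : ∃ gs ∈ subdiff (bigF n q f) xs,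
      -gs - α • Lmap n q a lams ∈ normalCone (prodSet n q Ω) xs)
    (μ : ℝ)
    (hμmax : ∀ μ' : ℝ, (∃ v : Fin n → ℝ, v ≠ 0 ∧ (lap n a).mulVec v = μ' • v) → μ' ≤ μ)
    (k : ℝ) (hk0 : 0 < k) (hk1 : k < 1 / (α * μ))
    :
    ∀ xv ∈ prodSet n q Ω, ∀ lamv : EuclideanSpace ℝ (Fin n × Fin q),
      0 ≤ V1aux xs lams xv lamv + k * V2aux n q α a f xs xv lamv := by
  intro xv hxv lamv
  obtain ⟨gs, hgs, hnc⟩ := hopt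
  have hαμ : 0 < α * μ := by
    by_contra! h
    linarith [one_div_nonpos.mpr h]
  have hkαμ : k * (α * μ) < 1 := (lt_div_iff₀ hαμ).mp hk1
  exact V1aux_add_mul_nonneg (Lmap_nonneg hsymm hnn hdiag) (Lmap_le_smul_one hsymm hμmax) hα.le
    hk0.le hkαμ.le hLxs hgs hnc hxv lamv

/-- V* = V₁* + k V₂* is nonnegative on Ω × ℝ^{nq}. -/
theorem stmt7
    (n q : ℕ) (hn : 2 ≤ n) (hq : 1 ≤ q) (α : ℝ) (hα : 0 < α)
    (a : Fin n → Fin n → ℝ)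
    (hsymm : ∀ i j, a i j = a j i) (hnn : ∀ i j, 0 ≤ a i j) (hdiag : ∀ i, a i i = 0)
    (hconn : (SimpleGraph.fromRel fun i j => 0 < a i j).Connected)
    (f : Fin n → EuclideanSpace ℝ (Fin q) → ℝ)
    (hfconv : ∀ i, ConvexOn ℝ Set.univ (f i)) (hfcont : ∀ i, Continuous (f i))
    (Ω : Fin n → Set (EuclideanSpace ℝ (Fin q)))
    (hΩne : ∀ i, (Ω i).Nonempty) (hΩcl : ∀ i, IsClosed (Ω i)) (hΩcv : ∀ i, Convex ℝ (Ω i))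
    (hint : (⋂ i, interior (Ω i)).Nonempty)
    (xs lams : EuclideanSpace ℝ (Fin n × Fin q))
    (hxsΩ : xs ∈ prodSet n q Ω) (hLxs : Lmap n q a xs = 0)
    (hopt : ∃ gs ∈ subdiff (bigF n q f) xs,
      -gs - α • Lmap n q a lams ∈ normalCone (prodSet n q Ω) xs)
    (μ : ℝ)
    (hμeig : ∃ v : Fin n → ℝ, v ≠ 0 ∧ (lap n a).mulVec v = μ • v)
    (hμmax : ∀ μ' : ℝ, (∃ v : Fin n → ℝ, v ≠ 0 ∧ (lap n a).mulVec v = μ' • v) → μ' ≤ μ)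
    (k : ℝ) (hk0 : 0 < k) (hk1 : k < 1 / (α * μ))
    :
    ∀ xv ∈ prodSet n q Ω, ∀ lamv : EuclideanSpace ℝ (Fin n × Fin q),
      0 ≤ V1aux xs lams xv lamv + k * V2aux n q α a f xs xv lamv :=
  stmt7_general n q α hα a hsymm hnn hdiag f Ω xs lams hLxs hopt μ hμmax k hk0 hk1

end
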